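/- (Approach-speed identity, equation (2.11).) Let ω : S² → ℝ be bounded measurable with Biot–Savart velocity u. For ε ∈ (0,1], let x_{1,ε} := (cos ε, −sin ε, 0) and x_{2,ε} := (cos ε, sin ε, 0). Then u(x_{1,ε})·e_φ(x_{1,ε}) − u(x_{2,ε})·e_φ(x_{2,ε}) = (2 sin ε / π) ∫_{S²} ( y₂ y₃ ω(y) ) / ( |x_{1,ε}−y|² |x_{2,ε}−y|² ) dσ(y). -/

import Mathlib

open MeasureTheory Real Filter Set
open scoped ENNReal NNReal

noncomputable section

abbrev E3 : Type := EuclideanSpace ℝ (Fin 3)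

/-- The vector `(a, b, c)` in `ℝ³`. -/
def vec3 (a b c : ℝ) : E3 := (WithLp.equiv 2 (Fin 3 → ℝ)).symm ![a, b, c]

/-- Euclidean dot product in `ℝ³`. -/
def dot3 (x y : E3) : ℝ := x 0 * y 0 + x 1 * y 1 + x 2 * y 2

/-- Cross product in `ℝ³`. -/
def cross3 (x y : E3) : E3 :=
  vec3 (x 1 * y 2 - x 2 * y 1) (x 2 * y 0 - x 0 * y 2) (x 0 * y 1 - x 1 * y 0)

/-- The unit sphere `S²` in `ℝ³`. -/
def S2 : Set E3 := Metric.sphere (0 : E3) 1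

/-- The surface measure on `S²`: the 2-dimensional Hausdorff measure restricted to `S²`. -/
def sigma2 : Measure E3 := (μH[2] : Measure E3).restrict S2

/-- Spherical coordinates. -/
def sc (φ θ : ℝ) : E3 := vec3 (cos θ * cos φ) (cos θ * sin φ) (sin θ)

/-- The Biot–Savart velocity of a vorticity `ω` on the sphere. -/
def biotSavart (ω : E3 → ℝ) (x : E3) : E3 :=
  (2 * Real.pi)⁻¹ • ∫ y, (‖x - y‖ ^ 2)⁻¹ • ω y • cross3 x y ∂sigma2

/-- The unit tangent vector `e_φ`. -/
def ephi (y : E3) : E3 := vec3 (-(y 1) / sqrt (1 - (y 2) ^ 2)) (y 0 / sqrt (1 - (y 2) ^ 2)) 0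

/-- The unit tangent vector `e_θ`. -/
def etheta (y : E3) : E3 :=
  vec3 (-(y 2) * y 0 / sqrt (1 - (y 2) ^ 2)) (-(y 2) * y 1 / sqrt (1 - (y 2) ^ 2))
    (sqrt (1 - (y 2) ^ 2))

/-- Reflection in the second coordinate: `ỹ`. -/
def flip2 (y : E3) : E3 := vec3 (y 0) (-(y 1)) (y 2)

/-- Reflection in the third coordinate: `ȳ`. -/
def flip3 (y : E3) : E3 := vec3 (y 0) (y 1) (-(y 2))

/-- `ω` is odd-odd symmetric on the sphere. -/
def OddOdd (ω : E3 → ℝ) : Prop := ∀ x ∈ S2, ω (flip2 x) = -ω x ∧ ω (flip3 x) = -ω x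

def x₀ : E3 := vec3 1 0 0

/-- The region `Q(k₁, k₂)` on the sphere. -/
def Qset (k₁ k₂ : ℝ) : Set E3 :=
  (fun p : ℝ × ℝ => sc p.1 p.2) '' (Ioo k₁ Real.pi ×ˢ Ioo k₂ (Real.pi / 2))

/-- The open quarter sphere. -/
def S2q : Set E3 := {y ∈ S2 | 0 < y 1 ∧ 0 < y 2}

/-- The (possibly infinite) Lipschitz constant of `f` on the set `s`. -/
def lipOn (f : ℝ × ℝ → ℝ) (s : Set (ℝ × ℝ)) : ℝ≥0∞ :=
  ⨆ p ∈ s, ⨆ q ∈ s, edist (f p) (f q) / edist p q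

/-!
On the equator `x = (c, s, 0)` one has `e_φ(x) = (-s, c, 0)` and `(x × y) · e_φ(x) = -y₃`, so
`u(x) · e_φ(x) = -(2π)⁻¹ ∫ y₃ ω(y) / |x - y|² dσ(y)`. Subtracting this at `(c, -s, 0)` and
`(c, s, 0)` and using `|(c, s, 0) - y|² - |(c, -s, 0) - y|² = -4 s y₂` gives the identity.

The analytic input is that both Biot–Savart integrals converge absolutely. Since
`|x × y| ≤ |x| |x - y|`, the kernel is bounded by `M |x| / |x - y|`, and `|x - y|⁻¹` is integrable
on `S²`: the sphere is covered by finitely many Lipschitz graphs over a planar disc, the Hausdorff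
measure of the image of a Lipschitz map is controlled by the measure of its domain, and
`|a - p|⁻¹` is integrable on bounded sets of the plane.
-/

section

variable {X Y : Type*} [EMetricSpace X] [MeasurableSpace X] [BorelSpace X]
  [EMetricSpace Y] [MeasurableSpace Y] [BorelSpace Y]

theorem LipschitzOnWith.hausdorffMeasure_restrict_image_le {K : ℝ≥0} {f : X → Y} {s : Set X}
    (hf : LipschitzOnWith K f s) (hfm : Measurable f) {d : ℝ} (hd : 0 ≤ d) :
    (μH[d] : Measure Y).restrict (f '' s) ≤ ((K : ℝ≥0∞) ^ d) • (μH[d].restrict s).map f := by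
  refine Measure.le_iff.2 fun B hB => ?_
  rw [Measure.restrict_apply hB, Measure.smul_apply, Measure.map_apply hfm hB,
    Measure.restrict_apply (hfm hB), ← image_preimage_inter, smul_eq_mul]
  exact (hf.mono inter_subset_right).hausdorffMeasure_image_le hd

theorem LipschitzOnWith.integrableOn_image_hausdorffMeasure {K : ℝ≥0} {f : X → Y} {s : Set X}
    (hf : LipschitzOnWith K f s) (hfm : Measurable f) {d : ℝ} (hd : 0 ≤ d) {g : Y → ℝ}
    (hgm : Measurable g) (hg : IntegrableOn (g ∘ f) s μH[d]) :
    IntegrableOn g (f '' s) μH[d] := by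
  refine Integrable.mono_measure ?_ (hf.hausdorffMeasure_restrict_image_le hfm hd)
  refine Integrable.smul_measure ?_ (by simp [ENNReal.rpow_eq_top_iff, hd.not_gt])
  exact (integrable_map_measure hgm.aestronglyMeasurable hfm.aemeasurable).2 hg

end

section

variable {E : Type*} [NormedAddCommGroup E] [NormedSpace ℝ E] [FiniteDimensional ℝ E]
  [MeasurableSpace E] [BorelSpace E] (μ : Measure E) [μ.IsAddHaarMeasure]

theorem integrableOn_inv_norm_ball (hE : 2 ≤ Module.finrank ℝ E) (r : ℝ) :
    IntegrableOn (fun p : E => ‖p‖⁻¹) (Metric.ball 0 r) μ := by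
  have : Nontrivial E := Module.nontrivial_of_finrank_pos (R := ℝ) (by omega)
  rw [integrableOn_fun_norm_addHaar μ (f := fun t => t⁻¹)]
  refine ((continuous_pow (Module.finrank ℝ E - 2)).integrableOn_Icc (a := 0) (b := r)).mono_set
    Ioo_subset_Icc_self |>.congr_fun (fun t ht => ?_) measurableSet_Ioo
  have ht : t ≠ 0 := ht.1.ne'
  simp only [smul_eq_mul]
  rw [show Module.finrank ℝ E - 1 = Module.finrank ℝ E - 2 + 1 by omega, pow_succ, mul_assoc,
    mul_inv_cancel₀ ht, mul_one]

theorem integrableOn_inv_norm_sub_of_isBounded (hE : 2 ≤ Module.finrank ℝ E) (a : E)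
    {s : Set E} (hs : Bornology.IsBounded s) :
    IntegrableOn (fun p : E => ‖a - p‖⁻¹) s μ := by
  obtain ⟨r, hr⟩ := hs.subset_ball a
  refine IntegrableOn.mono_set ?_ hr
  have h := (μ.measurePreserving_sub_left a).integrableOn_comp_preimage
    (measurableEmbedding_subLeft a) (f := fun p : E => ‖p‖⁻¹) (s := Metric.ball 0 r)
  have hpre : (fun p => a - p) ⁻¹' Metric.ball 0 r = Metric.ball a r := by
    ext p; simp [dist_eq_norm, norm_sub_rev]
  rw [hpre] at h
  exact h.2 (integrableOn_inv_norm_ball μ hE r)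

end

section SphereCharts

variable {n : ℕ}

def sphereChart (i : Fin (n + 1)) (s : ℝ) (p : Fin n → ℝ) : EuclideanSpace ℝ (Fin (n + 1)) :=
  WithLp.toLp 2 (Fin.insertNth i (s * √(1 - ∑ k, p k ^ 2)) p)

/-- Every point of the sphere has a coordinate with `y i ^ 2 ≥ 1 / (n + 1)`; the remaining
coordinates then lie in this set, on which the height `√(1 - ∑ k, p k ^ 2)` stays away from `0`. -/
def sphereChartDomain (n : ℕ) : Set (Fin n → ℝ) := {p | ∑ k, p k ^ 2 ≤ n / (n + 1)}

theorem sum_sq_lt_one_of_mem_sphereChartDomain {p : Fin n → ℝ} (hp : p ∈ sphereChartDomain n) :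
    ∑ k, p k ^ 2 < 1 :=
  hp.trans_lt <| (div_lt_one (by positivity)).2 (by linarith)

theorem isCompact_sphereChartDomain : IsCompact (sphereChartDomain n) := by
  refine Metric.isCompact_of_isClosed_isBounded
    (isClosed_le (by fun_prop) continuous_const) ?_
  refine (Metric.isBounded_closedBall (x := 0) (r := 1)).subset fun p hp => ?_
  refine mem_closedBall_zero_iff.2 <| (pi_norm_le_iff_of_nonneg zero_le_one).2 fun k => ?_
  have hk : p k ^ 2 ≤ ∑ j, p j ^ 2 :=
    Finset.single_le_sum (fun j _ => sq_nonneg (p j)) (Finset.mem_univ k)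
  rw [Real.norm_eq_abs, ← sq_le_one_iff_abs_le_one]
  linarith [sum_sq_lt_one_of_mem_sphereChartDomain hp]

theorem exists_lipschitzOnWith_sqrt_one_sub_sum_sq :
    ∃ K, LipschitzOnWith K (fun p : Fin n → ℝ => √(1 - ∑ k, p k ^ 2)) (sphereChartDomain n) := by
  refine LocallyLipschitzOn.exists_lipschitzOnWith_of_compact isCompact_sphereChartDomain
    fun p hp => ?_
  have hpos : 1 - ∑ k, p k ^ 2 ≠ 0 := by
    linarith [sum_sq_lt_one_of_mem_sphereChartDomain hp]
  have hsmooth : ContDiffAt ℝ 1 (fun p : Fin n → ℝ => √(1 - ∑ k, p k ^ 2)) p :=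
    (by fun_prop : ContDiffAt ℝ 1 (fun p : Fin n → ℝ => 1 - ∑ k, p k ^ 2) p).sqrt hpos
  obtain ⟨K, t, ht, hK⟩ := hsmooth.exists_lipschitzOnWith
  exact ⟨K, t, nhdsWithin_le_nhds ht, hK⟩

theorem exists_lipschitzOnWith_sphereChart (i : Fin (n + 1)) (s : ℝ) :
    ∃ K, LipschitzOnWith K (sphereChart i s) (sphereChartDomain n) := by
  obtain ⟨K, hK⟩ := exists_lipschitzOnWith_sqrt_one_sub_sum_sq (n := n)
  have hgraph : LipschitzOnWith (max (‖s‖₊ * K) 1)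
      (fun p : Fin n → ℝ => (Fin.insertNth i (s * √(1 - ∑ k, p k ^ 2)) p : Fin (n + 1) → ℝ))
      (sphereChartDomain n) := by
    refine LipschitzOnWith.of_dist_le_mul fun p hp q hq => ?_
    rw [Fin.dist_insertNth_insertNth, NNReal.coe_max, max_mul_of_nonneg _ _ dist_nonneg]
    refine max_le_max ?_ (by simp)
    rw [Real.dist_eq, ← mul_sub, abs_mul, ← Real.dist_eq, NNReal.coe_mul, coe_nnnorm,
      Real.norm_eq_abs, mul_assoc]
    exact mul_le_mul_of_nonneg_left (hK.dist_le_mul p hp q hq) (abs_nonneg s)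
  exact ⟨_, (PiLp.lipschitzWith_toLp 2 _).comp_lipschitzOnWith hgraph⟩

theorem continuous_sphereChart (i : Fin (n + 1)) (s : ℝ) : Continuous (sphereChart i s) :=
  (PiLp.continuous_toLp 2 _).comp (Continuous.finInsertNth i (by fun_prop) continuous_id)

theorem sphere_subset_iUnion_image_sphereChart :
    Metric.sphere (0 : EuclideanSpace ℝ (Fin (n + 1))) 1 ⊆
      ⋃ i, ⋃ s : SignType, sphereChart i s '' sphereChartDomain n := by
  intro y hy
  have hsum : ∑ j, y j ^ 2 = 1 := by
    have := EuclideanSpace.norm_eq y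
    rw [mem_sphere_zero_iff_norm.1 hy, eq_comm, Real.sqrt_eq_one] at this
    simpa using this
  obtain ⟨i, -, hi⟩ : ∃ i ∈ Finset.univ, ((n : ℝ) + 1)⁻¹ ≤ y i ^ 2 := by
    refine Finset.exists_le_of_sum_le Finset.univ_nonempty ?_
    rw [hsum, Finset.sum_const, Finset.card_univ, Fintype.card_fin, nsmul_eq_mul]
    push_cast
    rw [mul_inv_cancel₀ (by positivity)]
  have hrest : ∑ k, y (i.succAbove k) ^ 2 = 1 - y i ^ 2 := by
    rw [← hsum, Fin.sum_univ_succAbove _ i]; ring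
  refine mem_iUnion₂.2 ⟨i, SignType.sign (y i), Fin.removeNth i y.ofLp, ?_, ?_⟩
  · show ∑ k, y (i.succAbove k) ^ 2 ≤ n / (n + 1)
    have hn : (n : ℝ) / (n + 1) = 1 - ((n : ℝ) + 1)⁻¹ := by field_simp; ring
    rw [hrest, hn]
    linarith
  · simp only [sphereChart, Fin.removeNth_apply, hrest, sub_sub_cancel, Real.sqrt_sq_eq_abs,
      sign_mul_abs]
    exact congrArg (WithLp.toLp 2) (Fin.insertNth_self_removeNth i y.ofLp)

theorem norm_removeNth_sub_le_norm_sub_sphereChart (x : EuclideanSpace ℝ (Fin (n + 1)))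
    (i : Fin (n + 1)) (s : ℝ) (p : Fin n → ℝ) :
    ‖Fin.removeNth i x.ofLp - p‖ ≤ ‖x - sphereChart i s p‖ :=
  (pi_norm_le_iff_of_nonneg (norm_nonneg _)).2 fun k => by
    simpa [sphereChart, Fin.removeNth_apply] using
      PiLp.norm_apply_le (x - sphereChart i s p) (i.succAbove k)

theorem integrableOn_inv_norm_sub_sphere (hn : 2 ≤ n) (x : EuclideanSpace ℝ (Fin (n + 1))) :
    IntegrableOn (fun y => ‖x - y‖⁻¹) (Metric.sphere 0 1) μH[n] := by
  refine IntegrableOn.mono_set ?_ sphere_subset_iUnion_image_sphereChart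
  refine integrableOn_finite_iUnion.2 fun i => integrableOn_finite_iUnion.2 fun s => ?_
  obtain ⟨K, hK⟩ := exists_lipschitzOnWith_sphereChart i s
  refine hK.integrableOn_image_hausdorffMeasure (continuous_sphereChart i s).measurable
    n.cast_nonneg (by fun_prop) ?_
  have hvol : (μH[n] : Measure (Fin n → ℝ)) = volume := by
    simpa using hausdorffMeasure_pi_real (ι := Fin n)
  rw [hvol]
  set a := Fin.removeNth i x.ofLp
  refine (integrableOn_inv_norm_sub_of_isBounded volume (by simpa using hn) a
    isCompact_sphereChartDomain.isBounded).mono'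
    ((by fun_prop : Measurable fun y => ‖x - y‖⁻¹).comp
      (continuous_sphereChart i s).measurable).aestronglyMeasurable ?_
  have hne : ∀ᵐ p ∂(volume : Measure (Fin n → ℝ)), p ≠ a := by
    have : Nonempty (Fin n) := ⟨⟨0, by omega⟩⟩
    simp [ae_iff]
  filter_upwards [ae_restrict_of_ae hne] with p hp
  rw [Function.comp_apply, norm_inv, norm_norm]
  exact inv_anti₀ (norm_pos_iff.2 (sub_ne_zero.2 hp.symm))
    (norm_removeNth_sub_le_norm_sub_sphereChart x i s p)

end SphereCharts

@[simp] theorem vec3_apply_zero (a b c : ℝ) : vec3 a b c 0 = a := rfl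
@[simp] theorem vec3_apply_one (a b c : ℝ) : vec3 a b c 1 = b := rfl
@[simp] theorem vec3_apply_two (a b c : ℝ) : vec3 a b c 2 = c := rfl

theorem sq_norm_eq_E3 (v : E3) : ‖v‖ ^ 2 = v 0 ^ 2 + v 1 ^ 2 + v 2 ^ 2 := by
  simp [EuclideanSpace.norm_sq_eq, Fin.sum_univ_three]

theorem dot3_eq_inner (v w : E3) : dot3 v w = inner ℝ v w := by
  simp [dot3, PiLp.inner_apply, Fin.sum_univ_three, mul_comm]

theorem continuous_cross3 (x : E3) : Continuous (cross3 x) :=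
  (PiLp.continuous_toLp 2 _).comp (by fun_prop)

theorem norm_cross3_le (x y : E3) : ‖cross3 x y‖ ≤ ‖x‖ * ‖x - y‖ := by
  refine (pow_le_pow_iff_left₀ (norm_nonneg _) (by positivity) two_ne_zero).1 ?_
  rw [mul_pow, sq_norm_eq_E3, sq_norm_eq_E3, sq_norm_eq_E3]
  simp only [cross3, vec3_apply_zero, vec3_apply_one, vec3_apply_two, PiLp.sub_apply]
  -- Lagrange's identity, applied to `x × y = x × (y - x)`
  linear_combination sq_nonneg (x 0 * (y 0 - x 0) + x 1 * (y 1 - x 1) + x 2 * (y 2 - x 2))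

def biotSavartIntegrand (ω : E3 → ℝ) (x y : E3) : E3 := (‖x - y‖ ^ 2)⁻¹ • ω y • cross3 x y

theorem biotSavart_eq_integral (ω : E3 → ℝ) (x : E3) :
    biotSavart ω x = (2 * π)⁻¹ • ∫ y, biotSavartIntegrand ω x y ∂sigma2 :=
  rfl

section BiotSavart

variable {ω : E3 → ℝ} {M : ℝ}

theorem norm_biotSavartIntegrand_le (hbdd : ∀ y, |ω y| ≤ M) (x y : E3) :
    ‖biotSavartIntegrand ω x y‖ ≤ M * ‖x‖ * ‖x - y‖⁻¹ := by
  rcases eq_or_ne ‖x - y‖ 0 with hxy | hxy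
  · simp [biotSavartIntegrand, hxy]
  have hω : ‖ω y‖ ≤ M := hbdd y
  calc ‖biotSavartIntegrand ω x y‖ = (‖x - y‖ ^ 2)⁻¹ * (‖ω y‖ * ‖cross3 x y‖) := by
        simp [biotSavartIntegrand, norm_smul]
    _ ≤ (‖x - y‖ ^ 2)⁻¹ * (M * (‖x‖ * ‖x - y‖)) := by
        gcongr
        · exact (norm_nonneg _).trans hω
        · exact norm_cross3_le x y
    _ = M * ‖x‖ * ‖x - y‖⁻¹ := by field_simp

theorem integrable_biotSavartIntegrand (hmeas : Measurable ω) (hbdd : ∀ y, |ω y| ≤ M) (x : E3) :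
    Integrable (biotSavartIntegrand ω x) sigma2 := by
  have hsphere : Integrable (fun y => ‖x - y‖⁻¹) sigma2 := by
    have h := integrableOn_inv_norm_sub_sphere (n := 2) le_rfl x
    rwa [Nat.cast_ofNat] at h
  have hfm : Measurable (biotSavartIntegrand ω x) := by
    have := (continuous_cross3 x).measurable
    unfold biotSavartIntegrand
    fun_prop
  exact (hsphere.const_mul (M * ‖x‖)).mono' hfm.aestronglyMeasurable
    (ae_of_all _ (norm_biotSavartIntegrand_le hbdd x))

theorem dot3_biotSavart {x : E3} (hf : Integrable (biotSavartIntegrand ω x) sigma2) (e : E3) :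
    dot3 (biotSavart ω x) e = (2 * π)⁻¹ * ∫ y, dot3 (biotSavartIntegrand ω x y) e ∂sigma2 := by
  rw [biotSavart_eq_integral, dot3_eq_inner, real_inner_smul_left, real_inner_comm,
    ← integral_inner hf]
  simp only [dot3_eq_inner, real_inner_comm e]

theorem integrable_dot3_const {f : E3 → E3} (hf : Integrable f sigma2) (e : E3) :
    Integrable (fun y => dot3 (f y) e) sigma2 := by
  simpa only [dot3_eq_inner] using hf.inner_const e

theorem ephi_vec3 (c s : ℝ) : ephi (vec3 c s 0) = vec3 (-s) c 0 := by
  simp [ephi]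

theorem dot3_biotSavartIntegrand_ephi {c s : ℝ} (hcs : c ^ 2 + s ^ 2 = 1) (y : E3) :
    dot3 (biotSavartIntegrand ω (vec3 c s 0) y) (ephi (vec3 c s 0)) =
      -(y 2 * ω y / ‖vec3 c s 0 - y‖ ^ 2) := by
  simp only [biotSavartIntegrand, ephi_vec3, dot3, cross3, PiLp.smul_apply, smul_eq_mul,
    vec3_apply_zero, vec3_apply_one, vec3_apply_two]
  linear_combination (-(y 2 * ω y / ‖vec3 c s 0 - y‖ ^ 2)) * hcs

/-- The factor `y 2` vanishes at `y = (c, ±s, 0)`, so the identity survives Lean's `a / 0 = 0`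
there. -/
theorem div_sq_norm_sub_sub_div_sq_norm_sub (c s w : ℝ) (y : E3) :
    y 2 * w / ‖vec3 c s 0 - y‖ ^ 2 - y 2 * w / ‖vec3 c (-s) 0 - y‖ ^ 2 =
      4 * s * (y 1 * y 2 * w / (‖vec3 c (-s) 0 - y‖ ^ 2 * ‖vec3 c s 0 - y‖ ^ 2)) := by
  rcases eq_or_ne (y 2) 0 with hy | hy
  · simp [hy]
  have hpos : ∀ t, 0 < ‖vec3 c t 0 - y‖ ^ 2 := fun t => by
    rw [sq_norm_eq_E3]
    simp only [PiLp.sub_apply, vec3_apply_zero, vec3_apply_one, vec3_apply_two]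
    positivity
  have hA := hpos (-s)
  have hB := hpos s
  rw [sq_norm_eq_E3, sq_norm_eq_E3] at *
  simp only [PiLp.sub_apply, vec3_apply_zero, vec3_apply_one, vec3_apply_two] at *
  field_simp
  ring

theorem approach_speed_identity_of_sq_add_sq (hmeas : Measurable ω) (hbdd : ∀ y, |ω y| ≤ M)
    {c s : ℝ} (hcs : c ^ 2 + s ^ 2 = 1) :
    dot3 (biotSavart ω (vec3 c (-s) 0)) (ephi (vec3 c (-s) 0)) -
        dot3 (biotSavart ω (vec3 c s 0)) (ephi (vec3 c s 0)) =
      (2 * s / π) *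
        ∫ y, y 1 * y 2 * ω y / (‖vec3 c (-s) 0 - y‖ ^ 2 * ‖vec3 c s 0 - y‖ ^ 2) ∂sigma2 := by
  have hf := integrable_biotSavartIntegrand hmeas hbdd
  rw [dot3_biotSavart (hf _), dot3_biotSavart (hf _), ← mul_sub,
    ← integral_sub (integrable_dot3_const (hf _) _) (integrable_dot3_const (hf _) _)]
  have hcs' : c ^ 2 + (-s) ^ 2 = 1 := by rwa [neg_sq]
  simp only [dot3_biotSavartIntegrand_ephi hcs, dot3_biotSavartIntegrand_ephi hcs',
    neg_sub_neg, div_sq_norm_sub_sub_div_sq_norm_sub, integral_const_mul]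
  field_simp
  ring

end BiotSavart

/-- Approach-speed identity (2.11). -/
theorem approach_speed_identity (ω : E3 → ℝ) (M : ℝ) (hmeas : Measurable ω)
    (hbdd : ∀ y, |ω y| ≤ M) :
    ∀ ε ∈ Ioc (0:ℝ) 1,
      dot3 (biotSavart ω (vec3 (cos ε) (-sin ε) 0)) (ephi (vec3 (cos ε) (-sin ε) 0)) -
        dot3 (biotSavart ω (vec3 (cos ε) (sin ε) 0)) (ephi (vec3 (cos ε) (sin ε) 0)) =
      (2 * sin ε / Real.pi) *
        ∫ y, y 1 * y 2 * ω y /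
          (‖vec3 (cos ε) (-sin ε) 0 - y‖ ^ 2 * ‖vec3 (cos ε) (sin ε) 0 - y‖ ^ 2) ∂sigma2 :=
  fun ε _ => approach_speed_identity_of_sq_add_sq hmeas hbdd (cos_sq_add_sin_sq ε)
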